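/- Let f(n, k) denote the number of words in [k]^n avoiding the pattern 123, and define a_j = 1 if j ≡ 0 (mod 3), a_j = -1 if j ≡ 1 (mod 3), and a_j = 0 if j ≡ 2 (mod 3). Then for every integer k ≥ 0, the identity (∑_{n ≥ 0} f(n, k)·x^n) · (∑_{j=0}^{k} a_j·C(k, j)·x^j) = 1 holds as an identity of formal power series over ℚ. -/

import Mathlib

open PowerSeries

/-- The `i`-th letter (1-based value in `{1,…,k}`) of a word `w ∈ [k]^n`,
with value `0` outside the word. -/
def letter {n k : ℕ} (w : Fin n → Fin k) (i : ℕ) : ℕ :=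
  if h : i < n then (w ⟨i, h⟩ : ℕ) + 1 else 0

/-- `w` avoids the pattern 123: there is no 0-based index `i` with `i + 2 < n`
such that `w i < w (i+1) < w (i+2)`. -/
def Avoids123 {n k : ℕ} (w : Fin n → Fin k) : Prop :=
  ∀ i : ℕ, i + 2 < n →
    ¬ (letter w i < letter w (i + 1) ∧ letter w (i + 1) < letter w (i + 2))

/-- The number of words in `[k]^n` avoiding 123. -/
noncomputable def f (n k : ℕ) : ℕ := Nat.card {w : Fin n → Fin k // Avoids123 w}

/-- `a j = 1` if `j ≡ 0 (mod 3)`, `-1` if `j ≡ 1 (mod 3)`, `0` if `j ≡ 2 (mod 3)`. -/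
def a (j : ℕ) : ℚ := if j % 3 = 0 then 1 else if j % 3 = 1 then -1 else 0


/-!
The coefficient of `x ^ n` in the product is `∑ j, a j * C(k, j) * f (n - j, k)`, and
`C(k, j) * f (n - j, k)` counts the words of length `n` whose first `j` letters increase strictly
and which contain no 123 starting at a position `≥ j`. For a fixed word with `n ≥ 1` the admissible
`j` form an interval `[q, m]`, where `m` is the length of the longest increasing prefix and `q`
the least starting bound: it is `{0, 1}`, three consecutive integers, or empty. As `a 0 + a 1 = 0`
and any three consecutive `a j` sum to `0`, every word contributes `0`.
-/

def OrderEmbedding.equivStrictMono {α β : Type*} [LinearOrder α] [Preorder β] :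
    (α ↪o β) ≃ {f : α → β // StrictMono f} where
  toFun e := ⟨e, e.strictMono⟩
  invFun f := OrderEmbedding.ofStrictMono f.1 f.2
  left_inv _ := rfl
  right_inv _ := rfl

lemma PowerSeries.sum_range_C_mul_X_pow_eq_mk {R : Type*} [Semiring R] {c : ℕ → R} {N : ℕ}
    (hc : ∀ j, N < j → c j = 0) : ∑ j ∈ Finset.range (N + 1), C (c j) * X ^ j = mk c := by
  ext m
  simp only [map_sum, coeff_C_mul_X_pow, coeff_mk, Finset.sum_ite_eq, Finset.mem_range]
  split_ifs with h
  · rfl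
  · exact (hc m (by omega)).symm

namespace Words123

open Finset

variable {i j m n k : ℕ}

lemma letter_append_of_lt (u : Fin j → Fin k) (w : Fin m → Fin k) (hi : i < j) :
    letter (Fin.append u w) i = letter u i := by
  simp [letter, hi, show i < j + m by omega, Fin.append, Fin.addCases]

lemma letter_append_add (u : Fin j → Fin k) (w : Fin m → Fin k) (i : ℕ) :
    letter (Fin.append u w) (j + i) = letter w i := by
  by_cases hi : i < m
  · simp [letter, hi, Fin.append, Fin.addCases, Fin.subNat]
  · simp [letter, hi]

def IncreasingPrefix (j : ℕ) (v : Fin n → Fin k) : Prop :=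
  ∀ i, i + 1 < j → letter v i < letter v (i + 1)

def Avoids123From (j : ℕ) (v : Fin n → Fin k) : Prop :=
  ∀ i, j ≤ i → i + 2 < n →
    ¬ (letter v i < letter v (i + 1) ∧ letter v (i + 1) < letter v (i + 2))

lemma increasingPrefix_append_iff (u : Fin j → Fin k) (w : Fin m → Fin k) :
    IncreasingPrefix j (Fin.append u w) ↔ IncreasingPrefix j u := by
  refine forall₂_congr fun i hi => ?_
  rw [letter_append_of_lt u w (by omega), letter_append_of_lt u w hi]

lemma avoids123From_append_iff (u : Fin j → Fin k) (w : Fin m → Fin k) :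
    Avoids123From j (Fin.append u w) ↔ Avoids123 w := by
  constructor
  · intro h i hi
    simpa only [add_assoc, letter_append_add] using h (j + i) (Nat.le_add_right j i) (by omega)
  · intro h i hji hi
    obtain ⟨i, rfl⟩ := Nat.exists_eq_add_of_le hji
    simpa only [add_assoc, letter_append_add] using h i (by omega)

lemma increasingPrefix_iff_strictMono (u : Fin j → Fin k) :
    IncreasingPrefix j u ↔ StrictMono u := by
  rcases j with _ | j
  · exact iff_of_true (fun _ h => absurd h (by omega)) (Subsingleton.strictMono u)
  rw [Fin.strictMono_iff_lt_succ]
  constructor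
  · intro h i
    have := h i (by omega)
    simp only [letter, dif_pos (show (i : ℕ) < j + 1 by omega),
      dif_pos (show (i : ℕ) + 1 < j + 1 by omega)] at this
    exact Fin.lt_def.2 (by dsimp only [Fin.castSucc, Fin.castAdd, Fin.castLE, Fin.succ]; omega)
  · intro h i hi
    have := Fin.lt_def.1 (h ⟨i, by omega⟩)
    simp only [letter, dif_pos (show i < j + 1 by omega), dif_pos hi]
    simpa using this

lemma card_strictMono_fin (j k : ℕ) :
    Nat.card {u : Fin j → Fin k // StrictMono u} = k.choose j := by
  rw [← Nat.card_congr OrderEmbedding.equivStrictMono,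
    Nat.card_congr Set.powersetCard.ofFinEmbEquiv, Set.powersetCard.card, Nat.card_fin]

lemma card_increasingPrefix_avoids123From (h : j + m = n) :
    Nat.card {v : Fin n → Fin k // IncreasingPrefix j v ∧ Avoids123From j v} =
      k.choose j * f m k := by
  subst h
  let e : {c : (Fin j → Fin k) × (Fin m → Fin k) // StrictMono c.1 ∧ Avoids123 c.2} ≃
      {v // IncreasingPrefix j v ∧ Avoids123From j v} :=
    (Fin.appendEquiv j m).subtypeEquiv fun c => by
      rw [← increasingPrefix_iff_strictMono, ← increasingPrefix_append_iff c.1 c.2,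
        ← avoids123From_append_iff c.1 c.2]
      rfl
  rw [← Nat.card_congr (e.symm.trans Equiv.subtypeProdEquivProd).symm, Nat.card_prod,
    card_strictMono_fin, f]

section Window

variable {v : Fin n → Fin k}

lemma IncreasingPrefix.mono (h : IncreasingPrefix j v) (hij : i ≤ j) : IncreasingPrefix i v :=
  fun t ht => h t (by omega)

lemma Avoids123From.mono (h : Avoids123From i v) (hij : i ≤ j) : Avoids123From j v :=
  fun t ht => h t (hij.trans ht)

lemma increasingPrefix_one (v : Fin n → Fin k) : IncreasingPrefix 1 v :=
  fun _ h => absurd h (by omega)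

lemma avoids123From_self (v : Fin n → Fin k) : Avoids123From n v :=
  fun _ _ h => absurd h (by omega)

lemma window_shape {q : ℕ} (hn : 1 ≤ n) (hm : IncreasingPrefix m v) (hmn : m ≤ n)
    (hm_max : ∀ j ≤ n, IncreasingPrefix j v → j ≤ m) (hq : Avoids123From q v)
    (hq_min : ∀ j, Avoids123From j v → q ≤ j) :
    m = q + 2 ∨ (q = 0 ∧ m = 1) ∨ m < q := by
  rcases lt_or_ge m q with hmq | hqm
  · exact .inr (.inr hmq)
  have hm_le : m ≤ q + 2 := by
    by_contra! h
    exact hq q le_rfl (by omega) ⟨hm q (by omega), hm (q + 1) (by omega)⟩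
  rcases q with _ | q
  · have := hm_max 1 hn (increasingPrefix_one v)
    omega
  · -- by minimality of `q + 1` a 123 starts at `q`; it prolongs the increasing prefix to `q + 3`
    have hq' : ¬ Avoids123From q v := fun h => by have := hq_min q h; omega
    simp only [Avoids123From, not_forall, not_not] at hq'
    obtain ⟨i, hqi, hi, hrise⟩ := hq'
    obtain rfl : i = q := by
      by_contra hne
      exact hq i (by omega) hi hrise
    have : IncreasingPrefix (i + 3) v := by
      intro t ht
      obtain h | rfl | rfl : t + 1 < i + 1 ∨ t = i ∨ t = i + 1 := by omega
      exacts [hm t (by omega), hrise.1, hrise.2]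
    have := hm_max (i + 3) (by omega) this
    omega

end Window

lemma a_add_a_add_a (q : ℕ) : a q + a (q + 1) + a (q + 2) = 0 := by
  obtain h | h | h : q % 3 = 0 ∨ q % 3 = 1 ∨ q % 3 = 2 := by omega
  all_goals simp [a, Nat.add_mod, h]

lemma sum_a_Icc_eq_zero {q : ℕ} (h : m = q + 2 ∨ (q = 0 ∧ m = 1) ∨ m < q) :
    ∑ j ∈ Icc q m, a j = 0 := by
  rcases h with rfl | ⟨rfl, rfl⟩ | h
  · rw [sum_Icc_succ_top (by omega), sum_Icc_succ_top (by omega), Icc_self, sum_singleton,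
      a_add_a_add_a]
  · simp [sum_Icc_succ_top, a]
  · rw [Icc_eq_empty_of_lt h, sum_empty]

lemma sum_a_filter_eq_zero (hn : 1 ≤ n) (v : Fin n → Fin k)
    [DecidablePred fun j => IncreasingPrefix j v ∧ Avoids123From j v] :
    ∑ j ∈ (range (n + 1)).filter (fun j => IncreasingPrefix j v ∧ Avoids123From j v), a j = 0 := by
  classical
  have hq : ∃ j, Avoids123From j v := ⟨n, avoids123From_self v⟩
  set q := Nat.find hq
  set m := Nat.findGreatest (IncreasingPrefix · v) n
  have hm : IncreasingPrefix m v :=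
    Nat.findGreatest_spec (P := (IncreasingPrefix · v)) hn (increasingPrefix_one v)
  have hmn : m ≤ n := Nat.findGreatest_le n
  have hm_max : ∀ j ≤ n, IncreasingPrefix j v → j ≤ m :=
    fun _ => Nat.le_findGreatest (P := (IncreasingPrefix · v))
  have hq_min : ∀ j, Avoids123From j v → q ≤ j := fun _ => Nat.find_min' hq
  have hfilter : (range (n + 1)).filter (fun j => IncreasingPrefix j v ∧ Avoids123From j v) =
      Icc q m := by
    ext j
    simp only [mem_filter, mem_range, mem_Icc]
    constructor
    · rintro ⟨hj, hpre, hsuf⟩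
      exact ⟨hq_min j hsuf, hm_max j (by omega) hpre⟩
    · rintro ⟨hqj, hjm⟩
      exact ⟨by omega, hm.mono hjm, (Nat.find_spec hq).mono hqj⟩
  rw [hfilter]
  exact sum_a_Icc_eq_zero (window_shape hn hm hmn hm_max (Nat.find_spec hq) hq_min)

lemma f_zero (k : ℕ) : f 0 k = 1 := by
  simp [f, Avoids123]

lemma sum_a_mul_choose_mul_f (n k : ℕ) :
    ∑ j ∈ range (n + 1), a j * k.choose j * f (n - j) k = if n = 0 then 1 else 0 := by
  classical
  rcases Nat.eq_zero_or_pos n with rfl | hn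
  · simp [f_zero, a]
  rw [if_neg hn.ne']
  calc ∑ j ∈ range (n + 1), a j * k.choose j * f (n - j) k
      = ∑ j ∈ range (n + 1), ∑ v : Fin n → Fin k,
          if IncreasingPrefix j v ∧ Avoids123From j v then a j else 0 := by
        refine sum_congr rfl fun j hj => ?_
        rw [← sum_filter, sum_const, nsmul_eq_mul, ← Fintype.card_subtype,
          ← Nat.card_eq_fintype_card,
          card_increasingPrefix_avoids123From (by simp at hj; omega : j + (n - j) = n)]
        push_cast
        ring
    _ = ∑ v : Fin n → Fin k, ∑ j ∈ range (n + 1),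
          if IncreasingPrefix j v ∧ Avoids123From j v then a j else 0 := sum_comm
    _ = 0 := sum_eq_zero fun v _ => by rw [← sum_filter]; exact sum_a_filter_eq_zero hn v

end Words123

theorem stmt17 (k : ℕ) :
    (PowerSeries.mk fun n => (f n k : ℚ)) *
        ∑ j ∈ Finset.range (k + 1), C (a j * (k.choose j : ℚ)) * X ^ j = 1 := by
  rw [PowerSeries.sum_range_C_mul_X_pow_eq_mk fun j hj => by
    rw [Nat.choose_eq_zero_of_lt hj, Nat.cast_zero, mul_zero], mul_comm]
  ext n
  rw [coeff_mul, Finset.Nat.sum_antidiagonal_eq_sum_range_succ fun i j => coeff i _ * coeff j _]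
  simpa only [coeff_mk, coeff_one, mul_assoc] using Words123.sum_a_mul_choose_mul_f n k
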